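/- Let ξ ~ Poisson(λ) with λ > 0 and ξ̂ = (ξ − λ)/λ. Then for every integer ℓ ≥ 1, E[|ξ̂|^ℓ] ≤ (E[ξ̂^{ℓ+1}])^{ℓ/(ℓ+1)} when ℓ is odd (so ℓ+1 is even), and consequently E[|ξ̂|^ℓ] = O(ℓ! λ^{−ℓ/2}) for all ℓ, i.e., there exists an absolute constant C with E[|(ξ−λ)/λ|^ℓ] ≤ C^ℓ ℓ! λ^{−ℓ/2} for all integers ℓ ≥ 1 and all λ ≥ 1. -/

import Mathlib

/-!
The odd-order bound is Hölder's inequality with the conjugate exponents `(ℓ + 1)/ℓ` and `ℓ + 1`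
against the Poisson weights, which sum to one.

For the growth bound, `|y|ⁿ ≤ n! (eʸ + e⁻ʸ)` with `y = t (ξ - λ)` reduces absolute central moments
to the moment generating function `E e^{t(ξ - λ)} = exp (λ (eᵗ - 1 - t))`. For `t = ±λ^{-1/2}` and
`λ ≥ 1` its exponent is at most `λ t² = 1`, so `E|ξ - λ|ⁿ ≤ 2e n! λ^{n/2}` for every `n`, and
`C = 6 ≥ 2e` works.
-/

open Real

noncomputable def poissonWeight (lam : ℝ) (k : ℕ) : ℝ :=
  exp (-lam) * lam ^ k / k.factorial

lemma poissonWeight_nonneg {lam : ℝ} (hlam : 0 ≤ lam) (k : ℕ) : 0 ≤ poissonWeight lam k := by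
  unfold poissonWeight
  positivity

lemma hasSum_poissonWeight_mul_exp (lam s : ℝ) :
    HasSum (fun k : ℕ => poissonWeight lam k * exp (s * (k - lam)))
      (exp (lam * (exp s - 1 - s))) := by
  have h := (NormedSpace.expSeries_div_hasSum_exp (lam * exp s)).mul_left
    (exp (-lam) * exp (-(s * lam)))
  rw [← exp_eq_exp_ℝ, ← exp_add, ← exp_add] at h
  rw [show lam * (exp s - 1 - s) = -lam + -(s * lam) + lam * exp s by ring]
  refine h.congr_fun fun k => ?_
  rw [poissonWeight, mul_sub, exp_sub, mul_pow, ← exp_nat_mul, exp_add, exp_neg (s * lam)]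
  field_simp

lemma hasSum_poissonWeight (lam : ℝ) : HasSum (poissonWeight lam) 1 := by
  simpa using hasSum_poissonWeight_mul_exp lam 0

lemma abs_pow_le_factorial_mul_exp_add_exp_neg (y : ℝ) (n : ℕ) :
    |y| ^ n ≤ n.factorial * (exp y + exp (-y)) := by
  have h := pow_div_factorial_le_exp _ (abs_nonneg y) n
  rw [div_le_iff₀' (by positivity)] at h
  have h_exp_abs : exp |y| ≤ exp y + exp (-y) := by
    rcases abs_cases y with ⟨hy, _⟩ | ⟨hy, _⟩ <;> rw [hy] <;> linarith [exp_pos y, exp_pos (-y)]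
  exact h.trans (by gcongr)

lemma poissonWeight_mul_abs_sub_pow_le {lam t : ℝ} (hlam : 0 ≤ lam) (ht : 0 < t) (n k : ℕ) :
    poissonWeight lam k * |k - lam| ^ n ≤
      n.factorial / t ^ n * (poissonWeight lam k * exp (t * (k - lam)) +
        poissonWeight lam k * exp (-t * (k - lam))) := by
  have hw := poissonWeight_nonneg hlam k
  have hy := abs_pow_le_factorial_mul_exp_add_exp_neg (t * (k - lam)) n
  rw [abs_mul, abs_of_pos ht, mul_pow, ← le_div_iff₀' (by positivity)] at hy
  calc poissonWeight lam k * |k - lam| ^ n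
      ≤ poissonWeight lam k * (n.factorial * (exp (t * (k - lam)) + exp (-(t * (k - lam))))
          / t ^ n) := by gcongr
    _ = _ := by rw [neg_mul]; ring

lemma summable_poissonWeight_mul_abs_sub_pow {lam : ℝ} (hlam : 0 ≤ lam) (n : ℕ) :
    Summable (fun k : ℕ => poissonWeight lam k * |k - lam| ^ n) :=
  .of_nonneg_of_le (fun k => mul_nonneg (poissonWeight_nonneg hlam k) (by positivity))
    (poissonWeight_mul_abs_sub_pow_le hlam one_pos n)
    (((hasSum_poissonWeight_mul_exp lam 1).add
      (hasSum_poissonWeight_mul_exp lam (-1))).summable.mul_left _)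

lemma tsum_poissonWeight_mul_abs_sub_pow_le {lam t : ℝ} (hlam : 0 ≤ lam) (ht : 0 < t) (n : ℕ) :
    ∑' k : ℕ, poissonWeight lam k * |k - lam| ^ n ≤
      n.factorial / t ^ n * (exp (lam * (exp t - 1 - t)) + exp (lam * (exp (-t) - 1 - -t))) :=
  hasSum_le (poissonWeight_mul_abs_sub_pow_le hlam ht n)
    (summable_poissonWeight_mul_abs_sub_pow hlam n).hasSum
    (((hasSum_poissonWeight_mul_exp lam t).add (hasSum_poissonWeight_mul_exp lam (-t))).mul_left _)

lemma mul_exp_sub_one_sub_le_mul_sq {lam s : ℝ} (hlam : 0 ≤ lam) (hs : |s| ≤ 1) :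
    lam * (exp s - 1 - s) ≤ lam * s ^ 2 :=
  mul_le_mul_of_nonneg_left (abs_le.1 (abs_exp_sub_one_sub_id_le hs)).2 hlam

lemma tsum_poissonWeight_mul_abs_sub_pow_le_of_one_le {lam : ℝ} (hlam : 1 ≤ lam) (n : ℕ) :
    ∑' k : ℕ, poissonWeight lam k * |k - lam| ^ n ≤ 2 * exp 1 * n.factorial * √lam ^ n := by
  have hsqrt : 1 ≤ √lam := one_le_sqrt.2 hlam
  set t := (√lam)⁻¹
  have ht : 0 < t := by positivity
  have ht_abs : |t| ≤ 1 := by rw [abs_of_pos ht]; exact inv_le_one_of_one_le₀ hsqrt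
  have hlam_t : lam * t ^ 2 ≤ 1 := by
    rw [inv_pow, sq_sqrt (by linarith), mul_inv_cancel₀ (by positivity)]
  calc ∑' k : ℕ, poissonWeight lam k * |k - lam| ^ n
      ≤ n.factorial / t ^ n * (exp (lam * (exp t - 1 - t)) + exp (lam * (exp (-t) - 1 - -t))) :=
        tsum_poissonWeight_mul_abs_sub_pow_le (by linarith) ht n
    _ ≤ n.factorial / t ^ n * (exp 1 + exp 1) := by
        gcongr
        · exact (mul_exp_sub_one_sub_le_mul_sq (by linarith) ht_abs).trans hlam_t
        · exact (mul_exp_sub_one_sub_le_mul_sq (by linarith) (by rwa [abs_neg])).trans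
            (by rwa [neg_sq])
    _ = 2 * exp 1 * n.factorial * √lam ^ n := by rw [inv_pow, div_inv_eq_mul]; ring

lemma poissonWeight_mul_abs_sub_div_pow {lam : ℝ} (hlam : 0 < lam) (n k : ℕ) :
    poissonWeight lam k * |(k - lam) / lam| ^ n =
      poissonWeight lam k * |k - lam| ^ n / lam ^ n := by
  rw [abs_div, abs_of_pos hlam, div_pow, mul_div_assoc]

lemma tsum_poissonWeight_mul_abs_sub_div_pow_le {lam : ℝ} (hlam : 1 ≤ lam) (n : ℕ) :
    ∑' k : ℕ, poissonWeight lam k * |(k - lam) / lam| ^ n ≤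
      2 * exp 1 * n.factorial * lam ^ (-(n : ℝ) / 2) := by
  have hlam0 : 0 < lam := by linarith
  have hpow : √lam ^ n / lam ^ n = lam ^ (-(n : ℝ) / 2) := by
    have hsq : lam ^ n = √lam ^ n * √lam ^ n := by rw [← mul_pow, mul_self_sqrt hlam0.le]
    have hhalf : lam ^ ((n : ℝ) / 2) = √lam ^ n := by
      rw [sqrt_eq_rpow, ← rpow_natCast, ← rpow_mul hlam0.le]
      ring_nf
    rw [neg_div, rpow_neg hlam0.le, hhalf, hsq]
    field_simp
  simp_rw [poissonWeight_mul_abs_sub_div_pow hlam0, tsum_div_const]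
  calc (∑' k : ℕ, poissonWeight lam k * |k - lam| ^ n) / lam ^ n
      ≤ 2 * exp 1 * n.factorial * √lam ^ n / lam ^ n := by
        gcongr
        exact tsum_poissonWeight_mul_abs_sub_pow_le_of_one_le hlam n
    _ = 2 * exp 1 * n.factorial * lam ^ (-(n : ℝ) / 2) := by rw [mul_div_assoc, hpow]

lemma tsum_mul_le_rpow_tsum_mul_rpow {ι : Type*} {w f : ι → ℝ} {p : ℝ} (hp : 1 < p)
    (hw : ∀ i, 0 ≤ w i) (hw_sum : HasSum w 1) (hf : ∀ i, 0 ≤ f i)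
    (hfp : Summable (fun i => w i * f i ^ p)) :
    ∑' i, w i * f i ≤ (∑' i, w i * f i ^ p) ^ (1 / p) := by
  have hpq := HolderConjugate.conjExponent hp
  set q := p.conjExponent
  have hF : ∀ i, (w i ^ (1 / p) * f i) ^ p = w i * f i ^ p := fun i => by
    rw [mul_rpow (rpow_nonneg (hw i) _) (hf i), ← rpow_mul (hw i), one_div_mul_cancel hpq.ne_zero,
      rpow_one]
  have hG : ∀ i, (w i ^ (1 / q)) ^ q = w i := fun i => by
    rw [← rpow_mul (hw i), one_div_mul_cancel hpq.symm.ne_zero, rpow_one]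
  have hFG : ∀ i, w i ^ (1 / p) * f i * w i ^ (1 / q) = w i * f i := fun i => by
    rw [mul_right_comm, ← rpow_add' (hw i) (by simp [hpq.inv_add_inv_eq_one]), one_div, one_div,
      hpq.inv_add_inv_eq_one, rpow_one]
  have h := inner_le_Lp_mul_Lq_tsum_of_nonneg hpq
    (fun i => mul_nonneg (rpow_nonneg (hw i) _) (hf i)) (fun i => rpow_nonneg (hw i) _)
    (hfp.congr fun i => (hF i).symm)
    (hw_sum.summable.congr fun i => (hG i).symm)
  simpa only [hF, hG, hFG, hw_sum.tsum_eq, one_rpow, mul_one] using h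

lemma pow_rpow_add_one_div_self {x : ℝ} (hx : 0 ≤ x) {n : ℕ} (hn : n ≠ 0) :
    (x ^ n) ^ (((n : ℝ) + 1) / n) = x ^ (n + 1) := by
  rw [← rpow_natCast, ← rpow_mul hx, mul_div_cancel₀ _ (by exact_mod_cast hn), ← Nat.cast_add_one,
    rpow_natCast]

lemma tsum_poissonWeight_mul_abs_sub_div_pow_le_rpow {lam : ℝ} (hlam : 0 < lam) {n : ℕ}
    (hn : 1 ≤ n) :
    ∑' k : ℕ, poissonWeight lam k * |(k - lam) / lam| ^ n ≤
      (∑' k : ℕ, poissonWeight lam k * |(k - lam) / lam| ^ (n + 1)) ^ ((n : ℝ) / (n + 1)) := by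
  have hn0 : (0 : ℝ) < n := by exact_mod_cast hn
  have h := tsum_mul_le_rpow_tsum_mul_rpow (p := ((n : ℝ) + 1) / n)
    (by rw [one_lt_div hn0]; linarith) (poissonWeight_nonneg hlam.le) (hasSum_poissonWeight lam)
    (fun k => pow_nonneg (abs_nonneg ((k - lam) / lam)) n) ?_
  · simpa only [pow_rpow_add_one_div_self (abs_nonneg _) (by omega : n ≠ 0), one_div_div] using h
  · simp_rw [pow_rpow_add_one_div_self (abs_nonneg _) (by omega : n ≠ 0),
      poissonWeight_mul_abs_sub_div_pow hlam]
    exact (summable_poissonWeight_mul_abs_sub_pow hlam.le _).div_const _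

/-- For `ξ ~ Poisson(lam)` and `ξ̂ = (ξ − lam)/lam`: for odd `ℓ ≥ 1` one has the Lyapunov
bound `E[|ξ̂|^ℓ] ≤ (E[ξ̂^{ℓ+1}])^{ℓ/(ℓ+1)}`, and there is an absolute constant `C` with
`E[|ξ̂|^ℓ] ≤ C^ℓ ℓ! lam^{−ℓ/2}` for all `ℓ ≥ 1` and `lam ≥ 1`. -/
theorem poisson_hat_abs_moment_bound :
    (∀ lam : ℝ, 0 < lam → ∀ ℓ : ℕ, 1 ≤ ℓ → Odd ℓ →
      ∑' k : ℕ, (Real.exp (-lam) * lam ^ k / Nat.factorial k) *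
          |((k : ℝ) - lam) / lam| ^ ℓ ≤
        (∑' k : ℕ, (Real.exp (-lam) * lam ^ k / Nat.factorial k) *
            (((k : ℝ) - lam) / lam) ^ (ℓ + 1)) ^ ((ℓ : ℝ) / ((ℓ : ℝ) + 1))) ∧
    ∃ C : ℝ, 0 < C ∧ ∀ ℓ : ℕ, 1 ≤ ℓ → ∀ lam : ℝ, 1 ≤ lam →
      ∑' k : ℕ, (Real.exp (-lam) * lam ^ k / Nat.factorial k) *
          |((k : ℝ) - lam) / lam| ^ ℓ ≤
        C ^ ℓ * (Nat.factorial ℓ : ℝ) * lam ^ (-(ℓ : ℝ) / 2) := by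
  refine ⟨fun lam hlam ℓ hℓ hodd => ?_, 6, by norm_num, fun ℓ hℓ lam hlam => ?_⟩
  · have h := tsum_poissonWeight_mul_abs_sub_div_pow_le_rpow hlam hℓ
    simp only [hodd.add_one.pow_abs] at h
    exact h
  · have h2e : 2 * exp 1 ≤ 6 ^ ℓ := calc
      2 * exp 1 ≤ 6 := by linarith [exp_one_lt_d9]
      _ ≤ 6 ^ ℓ := le_self_pow₀ (by norm_num) (by omega)
    calc _ ≤ 2 * exp 1 * ℓ.factorial * lam ^ (-(ℓ : ℝ) / 2) :=
          tsum_poissonWeight_mul_abs_sub_div_pow_le hlam ℓ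
      _ ≤ 6 ^ ℓ * ℓ.factorial * lam ^ (-(ℓ : ℝ) / 2) := by gcongr
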